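/- arXiv:1102.4727 — 2 statements merged into one kernel-verified Lean document; each statement's English description precedes it below -/
import Mathlib

section
/- In a unicyclic graph G with unique cycle C, for any two consecutive edges e and f on C (i.e., edges of C sharing an endpoint), at most one of e and f is μ-critical; equivalently, μ(G − e) = μ(G) or μ(G − f) = μ(G). -/
/-- A set of vertices is independent if no two of its vertices are adjacent. -/
def SimpleGraph.IsIndepSet' {V : Type*} (G : SimpleGraph V) (s : Set V) : Prop :=
  s.Pairwise (fun a b => ¬ G.Adj a b)

/-- The independence number: the maximum cardinality of an independent set. -/
noncomputable def indepNum {V : Type*} (G : SimpleGraph V) : ℕ :=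
  sSup {n | ∃ s : Set V, G.IsIndepSet' s ∧ s.ncard = n}

/-- The matching number: the maximum cardinality of a matching. -/
noncomputable def matchNum {V : Type*} (G : SimpleGraph V) : ℕ :=
  sSup {n | ∃ M : SimpleGraph.Subgraph G, M.IsMatching ∧ M.edgeSet.ncard = n}

/-- A maximum independent set. -/
def IsMaxIndepSet {V : Type*} (G : SimpleGraph V) (s : Set V) : Prop :=
  G.IsIndepSet' s ∧ s.ncard = indepNum G

/-- The core: intersection of all maximum independent sets. -/
noncomputable def core {V : Type*} (G : SimpleGraph V) : Set V :=
  ⋂₀ {s | IsMaxIndepSet G s}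

/-- Open neighborhood of a set. -/
def nbhdSet {V : Type*} (G : SimpleGraph V) (s : Set V) : Set V :=
  {v | ∃ w ∈ s, G.Adj v w}

/-- Closed neighborhood of a set. -/
def closedNbhdSet {V : Type*} (G : SimpleGraph V) (s : Set V) : Set V :=
  s ∪ nbhdSet G s

/-- The tree component of `G - xy` containing `x`. -/
noncomputable def treeComp {V : Type*} (G : SimpleGraph V) (x y : V) :
    SimpleGraph ((G.deleteEdges {s(x,y)}).connectedComponentMk x).supp :=
  (G.deleteEdges {s(x,y)}).induce ((G.deleteEdges {s(x,y)}).connectedComponentMk x).supp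


/-!
A maximum matching contains at most one of two distinct edges sharing a vertex, and deleting
edges that avoid some maximum matching does not lower the matching number.
-/

namespace SimpleGraph

variable {V : Type*}

lemma Subgraph.IsMatching.eq_of_mem_edgeSet {G : SimpleGraph V} {M : G.Subgraph}
    (hM : M.IsMatching) {e f : Sym2 V} (he : e ∈ M.edgeSet) (hf : f ∈ M.edgeSet) {w : V}
    (hwe : w ∈ e) (hwf : w ∈ f) : e = f := by
  obtain ⟨u, rfl⟩ := Sym2.mem_iff_exists.1 hwe
  obtain ⟨u', rfl⟩ := Sym2.mem_iff_exists.1 hwf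
  rw [hM.eq_of_adj_left (M.mem_edgeSet.1 he) (M.mem_edgeSet.1 hf)]

lemma bddAbove_ncard_edgeSet_isMatching [Finite V] (G : SimpleGraph V) :
    BddAbove {n | ∃ M : G.Subgraph, M.IsMatching ∧ M.edgeSet.ncard = n} := by
  refine ⟨G.edgeSet.ncard, ?_⟩
  rintro _ ⟨M, -, rfl⟩
  exact Set.ncard_le_ncard M.edgeSet_subset

lemma Subgraph.IsMatching.ncard_edgeSet_le_matchNum [Finite V] {G H : SimpleGraph V}
    {M : G.Subgraph} (hM : M.IsMatching) (hMH : M.spanningCoe ≤ H) :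
    M.edgeSet.ncard ≤ matchNum H := by
  let M' : H.Subgraph := { M with adj_sub := fun h => hMH h }
  exact le_csSup (bddAbove_ncard_edgeSet_isMatching H) ⟨M', hM, rfl⟩

lemma exists_isMatching_ncard_edgeSet_eq_matchNum [Finite V] (G : SimpleGraph V) :
    ∃ M : G.Subgraph, M.IsMatching ∧ M.edgeSet.ncard = matchNum G := by
  refine Nat.sSup_mem ?_ (bddAbove_ncard_edgeSet_isMatching G)
  exact ⟨0, ⊥, by simp [Subgraph.IsMatching], by simp⟩

lemma matchNum_mono [Finite V] {G H : SimpleGraph V} (h : G ≤ H) : matchNum G ≤ matchNum H := by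
  obtain ⟨M, hM, hmax⟩ := exists_isMatching_ncard_edgeSet_eq_matchNum G
  exact hmax ▸ hM.ncard_edgeSet_le_matchNum ((Subgraph.spanningCoe_le M).trans h)

lemma matchNum_deleteEdges_eq_of_disjoint [Finite V] {G : SimpleGraph V} {M : G.Subgraph}
    (hM : M.IsMatching) (hmax : M.edgeSet.ncard = matchNum G) {s : Set (Sym2 V)}
    (hs : Disjoint M.edgeSet s) : matchNum (G.deleteEdges s) = matchNum G := by
  refine le_antisymm (matchNum_mono (G.deleteEdges_le s)) (hmax ▸ ?_)
  refine hM.ncard_edgeSet_le_matchNum fun a b hab => ?_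
  exact (deleteEdges_adj ..).2 ⟨M.adj_sub hab, hs.notMem_of_mem_left hab⟩

end SimpleGraph

open SimpleGraph

theorem stmt5_general {V : Type*} [Fintype V] (G : SimpleGraph V)
    (e f : Sym2 V) (hef : e ≠ f)
    (hshare : ∃ w : V, w ∈ e ∧ w ∈ f) :
    matchNum (G.deleteEdges {e}) = matchNum G ∨
      matchNum (G.deleteEdges {f}) = matchNum G := by
  obtain ⟨M, hM, hmax⟩ := exists_isMatching_ncard_edgeSet_eq_matchNum G
  obtain ⟨w, hwe, hwf⟩ := hshare
  by_cases heM : e ∈ M.edgeSet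
  · refine Or.inr (matchNum_deleteEdges_eq_of_disjoint hM hmax ?_)
    exact Set.disjoint_singleton_right.2 fun hfM => hef (hM.eq_of_mem_edgeSet heM hfM hwe hwf)
  · exact Or.inl (matchNum_deleteEdges_eq_of_disjoint hM hmax (Set.disjoint_singleton_right.2 heM))

theorem stmt5 {V : Type*} [Fintype V] (G : SimpleGraph V)
    (hconn : G.Connected) (huni : G.edgeSet.ncard = Fintype.card V)
    {v : V} (c : G.Walk v v) (hc : c.IsCycle)
    (e f : Sym2 V) (he : e ∈ c.edges) (hf : f ∈ c.edges) (hef : e ≠ f)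
    (hshare : ∃ w : V, w ∈ e ∧ w ∈ f) :
    matchNum (G.deleteEdges {e}) = matchNum G ∨
      matchNum (G.deleteEdges {f}) = matchNum G :=
  stmt5_general G e f hef hshare
end

section
/- If G is a König–Egerváry graph (i.e., α(G) + μ(G) = |V(G)|), then every maximum matching of G matches N(core(G)) into core(G); that is, for every maximum matching M, each vertex of N(core(G)) is matched by M to a vertex of core(G). -/
/-!
Fix a maximum independent set `S` and a maximum matching `M`. Every edge of `M` has an endpoint
outside the independent set `S`, and distinct edges of a matching are disjoint, so choosing such an
endpoint embeds `M` into `Sᶜ`. In a König–Egerváry graph `|Sᶜ| = μ(G) = |M|`, so this embedding is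
onto: every vertex outside `S` lies on an edge of `M` whose other endpoint is in `S`. A neighbour of
the core lies in no maximum independent set, so its `M`-partner lies in all of them.
-/

namespace SimpleGraph

variable {V : Type*} {G : SimpleGraph V}

lemma IsIndepSet'.exists_notMem_of_mem_edgeSet {S : Set V} (hS : G.IsIndepSet' S)
    {M : G.Subgraph} {e : Sym2 V} (he : e ∈ M.edgeSet) : ∃ a ∈ e, a ∉ S := by
  induction e using Sym2.ind with
  | _ a b =>
    by_contra! h
    have hab : G.Adj a b := M.adj_sub he
    exact hS (h a (Sym2.mem_mk_left a b)) (h b (Sym2.mem_mk_right a b)) hab.ne hab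

lemma Subgraph.IsMatching.eq_of_mem_edgeSet_of_mem {M : G.Subgraph} (hM : M.IsMatching)
    {e₁ e₂ : Sym2 V} (h₁ : e₁ ∈ M.edgeSet) (h₂ : e₂ ∈ M.edgeSet) {x : V}
    (hx₁ : x ∈ e₁) (hx₂ : x ∈ e₂) : e₁ = e₂ := by
  obtain ⟨y₁, rfl⟩ := Sym2.mem_iff_exists.mp hx₁
  obtain ⟨y₂, rfl⟩ := Sym2.mem_iff_exists.mp hx₂
  rw [hM.eq_of_adj_left (Subgraph.mem_edgeSet.mp h₁) (Subgraph.mem_edgeSet.mp h₂)]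

lemma Subgraph.IsMatching.exists_adj_mem_of_ncard_compl_le [Finite V] {M : G.Subgraph}
    (hM : M.IsMatching) {S : Set V} (hS : G.IsIndepSet' S)
    (hcard : Sᶜ.ncard ≤ M.edgeSet.ncard) {v : V} (hv : v ∉ S) : ∃ w ∈ S, M.Adj v w := by
  choose g hg using fun e : M.edgeSet => hS.exists_notMem_of_mem_edgeSet e.2
  have hinj : Function.Injective g := fun e₁ e₂ h =>
    Subtype.ext (hM.eq_of_mem_edgeSet_of_mem e₁.2 e₂.2 (hg e₁).1 (h ▸ (hg e₂).1))
  have hrange : Set.range g = Sᶜ := by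
    refine Set.eq_of_subset_of_ncard_le (Set.range_subset_iff.mpr fun e => (hg e).2) ?_
      (Set.toFinite _)
    rwa [Set.ncard_range_of_injective hinj, Nat.card_coe_set_eq]
  obtain ⟨e, rfl⟩ : v ∈ Set.range g := hrange ▸ hv
  obtain ⟨w, hew⟩ := Sym2.mem_iff_exists.mp (hg e).1
  have hvw : M.Adj (g e) w := by rw [← Subgraph.mem_edgeSet, ← hew]; exact e.2
  refine ⟨w, ?_, hvw⟩
  by_contra hw
  obtain ⟨e', rfl⟩ : w ∈ Set.range g := hrange ▸ hw
  have he'e : e' = e :=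
    Subtype.ext (hM.eq_of_mem_edgeSet_of_mem e'.2 e.2 (hg e').1 (hew ▸ Sym2.mem_mk_right _ _))
  exact (M.adj_sub hvw).ne (by rw [he'e])

end SimpleGraph

lemma exists_isMaxIndepSet {V : Type*} [Finite V] (G : SimpleGraph V) :
    ∃ S : Set V, IsMaxIndepSet G S := by
  have hbdd : BddAbove {n | ∃ s : Set V, G.IsIndepSet' s ∧ s.ncard = n} :=
    ⟨Nat.card V, fun n ⟨s, _, hs⟩ => hs ▸ Set.ncard_le_card s⟩
  have h0 : 0 ∈ {n | ∃ s : Set V, G.IsIndepSet' s ∧ s.ncard = n} :=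
    ⟨∅, fun _ h => h.elim, Set.ncard_empty V⟩
  exact Nat.sSup_mem ⟨0, h0⟩ hbdd

lemma IsMaxIndepSet.ncard_compl_eq_matchNum {V : Type*} [Fintype V] {G : SimpleGraph V}
    (hKE : indepNum G + matchNum G = Fintype.card V) {S : Set V} (hS : IsMaxIndepSet G S) :
    Sᶜ.ncard = matchNum G := by
  have := Set.ncard_add_ncard_compl S
  rw [Nat.card_eq_fintype_card, hS.2] at this
  omega

lemma IsMaxIndepSet.notMem_of_mem_nbhdSet_core {V : Type*} {G : SimpleGraph V} {S : Set V}
    (hS : IsMaxIndepSet G S) {v : V} (hv : v ∈ nbhdSet G (core G)) : v ∉ S := by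
  obtain ⟨u, hu, hvu⟩ := hv
  exact fun hvS => hS.1 hvS (hu S hS) hvu.ne hvu

theorem stmt11 {V : Type*} [Fintype V] (G : SimpleGraph V)
    (hKE : indepNum G + matchNum G = Fintype.card V) :
    ∀ M : SimpleGraph.Subgraph G, M.IsMatching → M.edgeSet.ncard = matchNum G →
      ∀ v ∈ nbhdSet G (core G), ∃ w ∈ core G, M.Adj v w := by
  intro M hM hMcard v hv
  have matched : ∀ S, IsMaxIndepSet G S → ∃ w ∈ S, M.Adj v w := fun S hS =>
    hM.exists_adj_mem_of_ncard_compl_le hS.1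
      ((hS.ncard_compl_eq_matchNum hKE).trans_le hMcard.ge) (hS.notMem_of_mem_nbhdSet_core hv)
  obtain ⟨S₀, hS₀⟩ := exists_isMaxIndepSet G
  obtain ⟨w, -, hvw⟩ := matched S₀ hS₀
  refine ⟨w, fun S hS => ?_, hvw⟩
  obtain ⟨w', hw'S, hvw'⟩ := matched S hS
  rwa [hM.eq_of_adj_left hvw hvw']
end
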